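/- An infinite word x is rich if and only if every complete first return to a palindromic factor of x is itself a palindrome. -/

import Mathlib

open List

/-- The prefix of length `n` of an infinite word `x`. -/
def wordTake {A : Type*} (x : ℕ → A) (n : ℕ) : List A := (List.range n).map x

/-- The finite word `u` occurs in the infinite word `x` at position `i`. -/
def OccursAt {A : Type*} (u : List A) (x : ℕ → A) (i : ℕ) : Prop :=
  (List.range u.length).map (fun k => x (i + k)) = u

/-- `u` is a factor of the infinite word `x`. -/
def IsFactor {A : Type*} (u : List A) (x : ℕ → A) : Prop := ∃ i, OccursAt u x i

/-- A palindrome is a finite word equal to its reversal. -/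
def IsPalindrome {A : Type*} (u : List A) : Prop := u.reverse = u

/-- The number of distinct palindromic factors of a finite word `u`
(including the empty word). -/
noncomputable def palCount {A : Type*} (u : List A) : ℕ :=
  {v : List A | v <:+: u ∧ IsPalindrome v}.ncard

/-- A finite word `u` is rich if it has `|u| + 1` distinct palindromic factors. -/
def RichList {A : Type*} (u : List A) : Prop := palCount u = u.length + 1

/-- An infinite word is rich if all of its factors are rich. -/
def RichWord {A : Type*} (x : ℕ → A) : Prop := ∀ u, IsFactor u x → RichList u

/-- The defect of a finite word. -/
noncomputable def defect {A : Type*} (u : List A) : ℕ := u.length + 1 - palCount u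

/-- An infinite word has finite defect if the defects of its prefixes are bounded. -/
def FiniteDefect {A : Type*} (x : ℕ → A) : Prop :=
  ∃ C, ∀ n, defect (wordTake x n) ≤ C

/-- The extension of a morphism (given by its values on letters) to finite words. -/
def listApply {A B : Type*} (f : A → List B) (w : List A) : List B := w.flatMap f

/-- A morphism is non-erasing if the image of every letter is non-empty. -/
def NonErasing {A B : Type*} (f : A → List B) : Prop := ∀ a, f a ≠ []

/-- `y` is the image of the infinite word `x` under the morphism `f`, i.e. `y = f(x)` :
the image of every prefix of `x` is a prefix of `y`. -/
def IsMorphicImage {A B : Type*} (f : A → List B) (x : ℕ → A) (y : ℕ → B) : Prop :=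
  ∀ k, ∃ n, listApply f (wordTake x k) = wordTake y n

/-- A substitution is primitive if some power `τ^N` (`N ≥ 1`) maps every letter to a word
containing every letter. -/
def Primitive {A : Type*} (τ : A → List A) : Prop :=
  ∃ N : ℕ, 1 ≤ N ∧ ∀ a b : A, b ∈ (listApply τ)^[N] [a]

/-- An infinite word is pure primitive morphic if it is a fixed point of a primitive
substitution. -/
def PurePrimitiveMorphic {A : Type*} (x : ℕ → A) : Prop :=
  ∃ τ : A → List A, NonErasing τ ∧ Primitive τ ∧ IsMorphicImage τ x x

/-- An infinite word is primitive morphic if it is the morphic image of a pure primitive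
morphic word over some finite alphabet. -/
def PrimitiveMorphic {B : Type*} (y : ℕ → B) : Prop :=
  ∃ (A : Type) (_ : Fintype A) (f : A → List B) (x : ℕ → A),
    NonErasing f ∧ PurePrimitiveMorphic x ∧ IsMorphicImage f x y

/-- A morphism is of class P if `f(a) = p qₐ` with `p` and each `qₐ` palindromes. -/
def ClassP {A B : Type*} (f : A → List B) : Prop :=
  ∃ p : List B, IsPalindrome p ∧ ∀ a, ∃ q : List B, IsPalindrome q ∧ f a = p ++ q

/-- Two morphisms are conjugate if `f(a)u = u g(a)` for all `a`, or `u f(a) = g(a) u`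
for all `a`, for some finite word `u`. -/
def Conjugate {A B : Type*} (f g : A → List B) : Prop :=
  ∃ u : List B, (∀ a, f a ++ u = u ++ g a) ∨ (∀ a, u ++ f a = g a ++ u)

/-- Class P' : morphisms conjugate to some class P morphism. -/
def ClassP' {A B : Type*} (f : A → List B) : Prop :=
  ∃ g : A → List B, ClassP g ∧ Conjugate f g

/-- `FP'` : infinite words fixed by some primitive substitution of class P'. -/
def InFPprime {A : Type*} (x : ℕ → A) : Prop :=
  ∃ τ : A → List A, NonErasing τ ∧ Primitive τ ∧ ClassP' τ ∧ IsMorphicImage τ x x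

/-- The number of occurrences of `u` in the finite word `w`. -/
noncomputable def occCount {A : Type*} (u w : List A) : ℕ :=
  {i : ℕ | i + u.length ≤ w.length ∧ (w.drop i).take u.length = u}.ncard

/-- `v` is a first return to the non-empty factor `u` in `x` : `vu` is a factor of `x`
beginning (and ending) in `u` and containing exactly two occurrences of `u`;
`vu` is then the corresponding complete first return to `u`. -/
def FirstReturn {A : Type*} (u : List A) (x : ℕ → A) (v : List A) : Prop :=
  u ≠ [] ∧ IsFactor (v ++ u) x ∧ u <+: (v ++ u) ∧ occCount u (v ++ u) = 2

/-- An infinite word is uniformly recurrent if every factor occurs in every sufficiently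
long factor. -/
def UniformlyRecurrent {A : Type*} (x : ℕ → A) : Prop :=
  ∀ u : List A, IsFactor u x → ∃ n, ∀ v : List A, IsFactor v x → v.length = n → u <:+: v

/-- `d` is the derived word of `x` at the non-empty prefix `u` : `x` factors as a
concatenation `r 0, r 1, r 2, …` of first returns to `u` (each complete first return
`r n ++ u` occurring at the corresponding partial-sum position), and `d n` is the rank
of `r n` in the order of first occurrence, i.e. the number of distinct return words
appearing strictly before the first occurrence of `r n`. -/
def IsDerivedWord {A : Type*} (x : ℕ → A) (u : List A) (d : ℕ → ℕ) : Prop :=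
  ∃ r : ℕ → List A,
    (∀ n, FirstReturn u x (r n)) ∧
    (∀ n, OccursAt (r n ++ u) x (∑ i ∈ Finset.range n, (r i).length)) ∧
    (∀ n, d n = (r '' {k | k < sInf {k | r k = r n}}).ncard)

/-- Class P_ret of Balková et al.: a morphism injective on letters such that for some
palindrome `p` (the marker), each `f(a)p` is a palindrome beginning and ending in `p`
and containing exactly two occurrences of `p`. -/
def ClassPret {A B : Type*} (f : A → List B) : Prop :=
  (∀ a b : A, a ≠ b → f a ≠ f b) ∧
  ∃ p : List B, IsPalindrome p ∧ ∀ a,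
    IsPalindrome (f a ++ p) ∧ p <+: (f a ++ p) ∧ p <:+ (f a ++ p) ∧
      occCount p (f a ++ p) = 2
/-!
Appending a letter to a finite word `w` creates at most one new palindromic factor, the longest
palindromic suffix `p` of `wa`: a shorter palindromic suffix of `wa` is a suffix, hence a prefix,
of `p`, so it already occurs in `w`. Thus `wa` is rich iff `w` is rich and `p` does not occur
in `w`.

If `r` is a complete return to a palindrome `u` in a rich word, the longest palindromic suffix
`p` of `r` has `u` as a suffix and hence as a prefix, so it starts at one of the two occurrences
of `u`: either `p = r`, or `p = u`, which already occurs at the start of `r`.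
Conversely, if the longest palindromic suffix `p` of `wa` occurs in `w`, the shortest suffix
of `wa` that begins with `p` and is longer than `p` is a complete return to `p`; if it is a
palindrome, it is a longer palindromic suffix of `wa`.
-/

section

variable {A : Type*}

theorem IsPalindrome.prefix_of_suffix {p q : List A} (hp : IsPalindrome p)
    (hq : IsPalindrome q) (h : q <:+ p) : q <+: p := by
  have h' := reverse_prefix.mpr h
  rwa [hp, hq] at h'

theorem List.IsSuffix.dropLast {l₁ l₂ : List A} (h : l₁ <:+ l₂) :
    l₁.dropLast <:+ l₂.dropLast := by
  obtain ⟨s, rfl⟩ := h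
  rcases eq_or_ne l₁ [] with rfl | hne
  · exact nil_suffix
  · rw [dropLast_append_of_ne_nil hne]
    exact suffix_append s _

def palFactors (w : List A) : Set (List A) := {v | v <:+: w ∧ IsPalindrome v}

theorem palCount_eq_ncard (w : List A) : palCount w = (palFactors w).ncard := rfl

theorem palFactors_finite (w : List A) : (palFactors w).Finite :=
  (finite_toSet w.sublists).subset fun _ hv => mem_sublists.mpr hv.1.sublist

theorem palFactors_nil : palFactors ([] : List A) = {[]} := by
  ext v
  simp +contextual [palFactors, IsPalindrome]

def IsLongestPalSuffix (p w : List A) : Prop :=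
  p <:+ w ∧ IsPalindrome p ∧ ∀ q, q <:+ w → IsPalindrome q → q.length ≤ p.length

theorem exists_isLongestPalSuffix (w : List A) : ∃ p, IsLongestPalSuffix p w := by
  obtain ⟨p, ⟨hp, hpal⟩, hmax⟩ :=
    Set.exists_max_image {q | q <:+ w ∧ IsPalindrome q} length
    ((finite_toSet w.tails).subset fun q hq => (mem_tails q w).mpr hq.1) ⟨[], nil_suffix, rfl⟩
  exact ⟨p, hp, hpal, fun q hq hqpal => hmax q ⟨hq, hqpal⟩⟩

theorem palFactors_append_singleton {l p : List A} {a : A}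
    (hp : IsLongestPalSuffix p (l ++ [a])) :
    palFactors (l ++ [a]) = insert p (palFactors l) := by
  obtain ⟨hps, hpal, hmax⟩ := hp
  ext v
  simp only [palFactors, Set.mem_insert_iff, Set.mem_ofPred_eq]
  constructor
  · rintro ⟨hv, hvpal⟩
    rcases infix_concat_iff.mp hv with hvs | hvl
    · rcases eq_or_ne v p with rfl | hne
      · exact Or.inl rfl
      have hlt : v.length < p.length := (hmax v hvs hvpal).lt_of_ne fun h =>
        hne ((suffix_of_suffix_length_le hvs hps h.le).eq_of_length h)
      have hvp : v <+: p.dropLast :=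
        prefix_of_prefix_length_le
          (hpal.prefix_of_suffix hvpal (suffix_of_suffix_length_le hvs hps hlt.le))
          (dropLast_prefix p) (by rw [length_dropLast]; omega)
      refine Or.inr ⟨hvp.isInfix.trans ?_, hvpal⟩
      simpa using hps.dropLast.isInfix
    · exact Or.inr ⟨hvl, hvpal⟩
  · rintro (rfl | ⟨hv, hvpal⟩)
    · exact ⟨hps.isInfix, hpal⟩
    · exact ⟨hv.trans (prefix_append l [a]).isInfix, hvpal⟩

theorem palCount_le (w : List A) : palCount w ≤ w.length + 1 := by
  induction w using reverseRecOn with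
  | nil => simp [palCount_eq_ncard, palFactors_nil]
  | append_singleton l a ih =>
    obtain ⟨p, hp⟩ := exists_isLongestPalSuffix (l ++ [a])
    have := Set.ncard_insert_le p (palFactors l)
    rw [palCount_eq_ncard, palFactors_append_singleton hp, length_append, length_singleton]
    rw [← palCount_eq_ncard] at this
    omega

theorem richList_nil : RichList ([] : List A) := by
  simp [RichList, palCount_eq_ncard, palFactors_nil]

theorem richList_append_singleton_iff {l p : List A} {a : A}
    (hp : IsLongestPalSuffix p (l ++ [a])) :
    RichList (l ++ [a]) ↔ RichList l ∧ ¬ p <:+: l := by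
  have hle := palCount_le l
  have hmem : p ∈ palFactors l ↔ p <:+: l := and_iff_left hp.2.1
  rw [RichList, RichList, palCount_eq_ncard, palFactors_append_singleton hp, length_append,
    length_singleton, ← hmem]
  by_cases hm : p ∈ palFactors l
  · rw [Set.insert_eq_of_mem hm, ← palCount_eq_ncard]
    simp only [hm, not_true_eq_false, and_false, iff_false]
    omega
  · rw [Set.ncard_insert_of_notMem hm (palFactors_finite l), ← palCount_eq_ncard]
    simp only [hm, not_false_eq_true, and_true]
    omega

def OccursIn (u w : List A) (i : ℕ) : Prop :=
  i + u.length ≤ w.length ∧ (w.drop i).take u.length = u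

theorem occCount_eq_ncard (u w : List A) : occCount u w = {i | OccursIn u w i}.ncard := rfl

theorem occursIn_iff {u w : List A} {i : ℕ} :
    OccursIn u w i ↔ i ≤ w.length ∧ u <+: w.drop i := by
  rw [OccursIn, prefix_iff_eq_take (l₁ := u), eq_comm (a := u)]
  refine ⟨fun ⟨hi, he⟩ => ⟨by omega, he⟩, fun ⟨hi, he⟩ => ⟨?_, he⟩⟩
  have := congrArg length he
  simp only [length_take, length_drop] at this
  omega

def IsCompleteReturn (u r : List A) : Prop := u <+: r ∧ u <:+ r ∧ occCount u r = 2

theorem isCompleteReturn_iff {u r : List A} :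
    IsCompleteReturn u r ↔ u <+: r ∧ u <:+ r ∧ u.length < r.length ∧
      ∀ i, OccursIn u r i → i = 0 ∨ i = r.length - u.length := by
  refine and_congr_right fun hpre => and_congr_right fun hsuf => ?_
  set S := {i | OccursIn u r i}
  have hfin : S.Finite := (Set.finite_Iic r.length).subset fun i hi => by
    have := hi.1
    simp only [Set.mem_Iic]
    omega
  have hpair : {0, r.length - u.length} ⊆ S := by
    rintro i (rfl | rfl)
    · exact occursIn_iff.mpr ⟨Nat.zero_le _, by simpa using hpre⟩
    · exact occursIn_iff.mpr ⟨Nat.sub_le _ _, by rw [← suffix_iff_eq_drop.mp hsuf]⟩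
  rw [occCount_eq_ncard]
  constructor
  · intro h2
    have hlt : u.length < r.length := by
      by_contra hge
      have hS : S ⊆ {0} := fun i hi => by
        have := hi.1
        rw [Set.mem_singleton_iff]
        omega
      have := Set.ncard_le_ncard hS
      rw [h2, Set.ncard_singleton] at this
      omega
    have hS : S = {0, r.length - u.length} := (Set.eq_of_subset_of_ncard_le hpair
      (by rw [h2, Set.ncard_pair (by omega)]) hfin).symm
    refine ⟨hlt, fun i hi => ?_⟩
    have hi' : i ∈ ({0, r.length - u.length} : Set ℕ) := hS ▸ hi
    simpa using hi'
  · rintro ⟨hlt, hS⟩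
    rw [← Set.ncard_pair (by omega : 0 ≠ r.length - u.length)]
    exact congrArg _ (subset_antisymm hS hpair)

theorem exists_isCompleteReturn_suffix {u l : List A} {a : A} (hsuf : u <:+ l ++ [a])
    (hocc : u <:+: l) : ∃ r, r <:+ l ++ [a] ∧ IsCompleteReturn u r := by
  let P : List A → Prop := fun s => s <:+ l ++ [a] ∧ u <+: s ∧ u.length < s.length
  have hP : ∃ s, P s := by
    obtain ⟨s, t, rfl⟩ := hocc
    exact ⟨u ++ t ++ [a], ⟨s, by simp⟩, prefix_append_of_prefix (prefix_append u t),
      by simp⟩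
  -- the shortest such suffix contains no occurrence of `u` strictly inside it
  obtain ⟨r, ⟨hr, hur, hlt⟩, hmin⟩ := exists_minimalFor_of_wellFoundedLT P length hP
  refine ⟨r, hr, isCompleteReturn_iff.mpr
    ⟨hur, suffix_of_suffix_length_le hsuf hr hlt.le, hlt, fun i hi => ?_⟩⟩
  obtain ⟨hi, hui⟩ := occursIn_iff.mp hi
  have hlen := hui.length_le
  rw [length_drop] at hlen
  by_cases hlong : u.length < r.length - i
  · have := hmin ⟨(drop_suffix i r).trans hr, hui, by rwa [length_drop]⟩
    simp only [length_drop] at this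
    omega
  · omega

theorem occursAt_append {s t : List A} {x : ℕ → A} {i : ℕ} :
    OccursAt (s ++ t) x i ↔ OccursAt s x i ∧ OccursAt t x (i + s.length) := by
  simp only [OccursAt, length_append, range_add, map_append, map_map, Function.comp_def,
    Nat.add_assoc]
  exact ⟨fun h => append_inj h (by simp), fun ⟨h₁, h₂⟩ => by rw [h₁, h₂]⟩

theorem IsFactor.of_infix {u w : List A} {x : ℕ → A} (hw : IsFactor w x) (h : u <:+: w) :
    IsFactor u x := by
  obtain ⟨s, t, rfl⟩ := h
  obtain ⟨i, hi⟩ := hw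
  exact ⟨i + s.length, (occursAt_append.mp (occursAt_append.mp hi).1).2⟩

theorem RichList.isPalindrome_of_isCompleteReturn {u r : List A} (hr : RichList r)
    (hu : IsPalindrome u) (hret : IsCompleteReturn u r) : IsPalindrome r := by
  obtain ⟨hpre, hsuf, hlt, hocc⟩ := isCompleteReturn_iff.mp hret
  obtain ⟨p, hps, hpal, hmax⟩ := exists_isLongestPalSuffix r
  have hup : u <:+ p := suffix_of_suffix_length_le hsuf hps (hmax u hsuf hu)
  have hoccp : OccursIn u r (r.length - p.length) := occursIn_iff.mpr
    ⟨Nat.sub_le _ _, by rw [← suffix_iff_eq_drop.mp hps]; exact hpal.prefix_of_suffix hu hup⟩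
  have hpr := hps.length_le
  have hur := hup.length_le
  rcases hocc _ hoccp with h | h
  · rwa [← hps.eq_of_length (by omega)]
  · obtain ⟨l, a, rfl⟩ := (eq_nil_or_concat' r).resolve_left (by rintro rfl; simp at hlt)
    have hpu : u = p := hup.eq_of_length (by omega)
    have hul : u <+: l :=
      prefix_of_prefix_length_le hpre (prefix_append l [a]) (by simp at hlt; omega)
    have hnew := ((richList_append_singleton_iff ⟨hps, hpal, hmax⟩).mp hr).2
    exact (hnew (hpu ▸ hul.isInfix)).elim

theorem richList_of_completeReturns_isPalindrome {w : List A}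
    (h : ∀ u r, u ≠ [] → IsPalindrome u → r <:+: w → IsCompleteReturn u r →
      IsPalindrome r) :
    RichList w := by
  induction w using reverseRecOn with
  | nil => exact richList_nil
  | append_singleton l a ih =>
    obtain ⟨p, hp⟩ := exists_isLongestPalSuffix (l ++ [a])
    refine (richList_append_singleton_iff hp).mpr ⟨ih fun u r hu hupal hr =>
      h u r hu hupal (hr.trans (prefix_append l [a]).isInfix), fun hpl => ?_⟩
    obtain ⟨hps, hpal, hmax⟩ := hp
    have hp0 : p ≠ [] := by
      rintro rfl
      simpa using hmax [a] (suffix_append l [a]) rfl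
    obtain ⟨r, hr, hret⟩ := exists_isCompleteReturn_suffix hps hpl
    have hle : r.length ≤ p.length := hmax r hr (h p r hp0 hpal hr.isInfix hret)
    have hlt : p.length < r.length := (isCompleteReturn_iff.mp hret).2.2.1
    omega

end

/-- An infinite word is rich if and only if every complete first return
to a palindromic factor is itself a palindrome. -/
theorem rich_iff_palindromic_returns {A : Type*} (x : ℕ → A) :
    RichWord x ↔
      ∀ u v : List A, IsPalindrome u → FirstReturn u x v → IsPalindrome (v ++ u) := by
  constructor
  · rintro hx u v hu ⟨-, hfac, hpre, hocc⟩
    exact (hx _ hfac).isPalindrome_of_isCompleteReturn hu ⟨hpre, suffix_append v u, hocc⟩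
  · intro h w hw
    refine richList_of_completeReturns_isPalindrome fun u r hu0 hu hr hret => ?_
    obtain ⟨v, rfl⟩ := hret.2.1
    exact h u v hu ⟨hu0, hw.of_infix hr, hret.1, hret.2.2⟩
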